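/- The d×d matrices W_odd := (1/√d) Σ_{i,j=0}^{d−1} (−1)^{δ_{j,0}} ω^{−i/m + ij + j/2} |i⟩⟨j| and W_ev := (1/√d) Σ_{i,j=0}^{d−1} (−1)^{δ_{j,0}} ω^{−i/m + ij + j/2} |d−1−i⟩⟨j| are unitary and satisfy W_odd Z_d W_odd† = O_{odd,2}, W_odd T_{d,m} W_odd† = O_{odd,3}, W_ev Z_d W_ev† = O_{ev,2}, and W_ev T_{d,m} W_ev† = O_{ev,3}. -/

import Mathlib

open Matrix

/-- `omg d t` is ω^t = exp(2πi·t/d), where ω = exp(2πi/d). -/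
noncomputable def omg (d : ℕ) (t : ℝ) : ℂ :=
  Complex.exp ((2 * Real.pi * t / d : ℝ) * Complex.I)

/-- Z_d = diag(1, ω, …, ω^{d−1}). -/
noncomputable def Zmat (d : ℕ) : Matrix (Fin d) (Fin d) ℂ :=
  Matrix.diagonal fun i => omg d (i : ℝ)

/-- T_{d,m} = Σ_i ω^{i+1/m}|i⟩⟨i| − (2i/d) sin(π/m) Σ_{i,j} (−1)^{δ_{i0}+δ_{j0}}
ω^{(i+j)/2−(d−2)/(2m)} |i⟩⟨j|. -/
noncomputable def Tmat (d m : ℕ) : Matrix (Fin d) (Fin d) ℂ :=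
  Matrix.of fun i j =>
    (if i = j then omg d ((i : ℝ) + 1 / m) else 0) -
      (2 * Complex.I / d) * (Real.sin (Real.pi / m) : ℂ) *
        ((-1 : ℂ) ^ (((if (i : ℕ) = 0 then 1 else 0) + (if (j : ℕ) = 0 then 1 else 0)) : ℕ)) *
        omg d (((i : ℝ) + j) / 2 - ((d : ℝ) - 2) / (2 * m))

/-- θ_m(x) = (x−1)/m. -/
noncomputable def tht (m x : ℕ) : ℝ := ((x : ℝ) - 1) / m

/-- O_{odd,x} = Σ_{i=0}^{d−2} ω^{θ_m(x)} |i⟩⟨i+1| + ω^{(1−d)θ_m(x)} |d−1⟩⟨0|. -/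
noncomputable def Oodd (d m x : ℕ) : Matrix (Fin d) (Fin d) ℂ :=
  Matrix.of fun i j =>
    (if (j : ℕ) = (i : ℕ) + 1 then omg d (tht m x) else 0) +
      (if (i : ℕ) = d - 1 ∧ (j : ℕ) = 0 then omg d ((1 - (d : ℝ)) * tht m x) else 0)

/-- O_{ev,x} = Σ_{i=0}^{d−2} ω^{θ_m(x)} |i+1⟩⟨i| + ω^{(1−d)θ_m(x)} |0⟩⟨d−1|. -/
noncomputable def Oev (d m x : ℕ) : Matrix (Fin d) (Fin d) ℂ :=
  Matrix.of fun i j =>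
    (if (i : ℕ) = (j : ℕ) + 1 then omg d (tht m x) else 0) +
      (if (i : ℕ) = 0 ∧ (j : ℕ) = d - 1 then omg d ((1 - (d : ℝ)) * tht m x) else 0)

/-- W_odd = (1/√d) Σ_{i,j} (−1)^{δ_{j0}} ω^{−i/m+ij+j/2} |i⟩⟨j|. -/
noncomputable def Wodd (d m : ℕ) : Matrix (Fin d) (Fin d) ℂ :=
  Matrix.of fun i j =>
    ((1 / Real.sqrt d : ℝ) : ℂ) * ((-1 : ℂ) ^ ((if (j : ℕ) = 0 then 1 else 0) : ℕ)) *
      omg d (-(i : ℝ) / m + (i : ℝ) * (j : ℝ) + (j : ℝ) / 2)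

/-- W_ev = (1/√d) Σ_{i,j} (−1)^{δ_{j0}} ω^{−i/m+ij+j/2} |d−1−i⟩⟨j|, written entrywise:
(W_ev)_{r,j} corresponds to i = d−1−r. -/
noncomputable def Wev (d m : ℕ) : Matrix (Fin d) (Fin d) ℂ :=
  Matrix.of fun r j =>
    ((1 / Real.sqrt d : ℝ) : ℂ) * ((-1 : ℂ) ^ ((if (j : ℕ) = 0 then 1 else 0) : ℕ)) *
      omg d (-((d - 1 - (r : ℕ) : ℕ) : ℝ) / m +
        ((d - 1 - (r : ℕ) : ℕ) : ℝ) * (j : ℝ) + (j : ℝ) / 2)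

section Aux
lemma omg_mul (d : ℕ) (s t : ℝ) : omg d s * omg d t = omg d (s + t) := by
  rw [omg, omg, omg, ← Complex.exp_add]
  congr 1
  push_cast
  ring

lemma omg_zero (d : ℕ) : omg d 0 = 1 := by simp [omg]

lemma omg_conj (d : ℕ) (t : ℝ) : (starRingEnd ℂ) (omg d t) = omg d (-t) := by
  rw [omg, omg, ← Complex.exp_conj, _root_.map_mul, Complex.conj_I, Complex.conj_ofReal]
  congr 1
  push_cast
  ring

lemma omg_int_mul (d : ℕ) (n : ℤ) (k : ℕ) :
    omg d ((n : ℝ) * k) = (omg d n) ^ k := by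
  rw [omg, omg, ← Complex.exp_nat_mul]
  congr 1
  push_cast
  ring

lemma omg_eq_one_iff (d : ℕ) (hd : d ≠ 0) (n : ℤ) : omg d (n : ℝ) = 1 ↔ (d : ℤ) ∣ n := by
  rw [omg, Complex.exp_eq_one_iff]
  constructor
  · rintro ⟨k, hk⟩
    refine ⟨k, ?_⟩
    have h2 : ((2 * Real.pi * (n:ℝ) / d : ℝ) : ℂ) * Complex.I
        = ((2 * Real.pi * (k:ℝ) : ℝ) : ℂ) * Complex.I := by
      rw [hk]; push_cast; ring
    have h3 : (2 * Real.pi * (n:ℝ) / d : ℝ) = 2 * Real.pi * (k:ℝ) := by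
      have := mul_right_cancel₀ Complex.I_ne_zero h2
      exact_mod_cast this
    have hd' : (d:ℝ) ≠ 0 := Nat.cast_ne_zero.mpr hd
    have h5 := congrArg (· * (d:ℝ)) h3
    simp only [div_mul_cancel₀ _ hd'] at h5
    have h4 : (n:ℝ) = (d:ℝ) * (k:ℝ) := by
      have hπ : (2*Real.pi) ≠ 0 := by positivity
      apply mul_left_cancel₀ hπ
      linear_combination h5
    exact_mod_cast h4
  · rintro ⟨q, rfl⟩
    refine ⟨q, ?_⟩
    have hd' : (d:ℝ) ≠ 0 := Nat.cast_ne_zero.mpr hd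
    have h : (2 * Real.pi * (((d:ℤ) * q : ℤ) : ℝ) / d) = (q:ℝ) * (2 * Real.pi) := by
      push_cast
      field_simp
    rw [h]
    push_cast
    ring

lemma omg_pow_d (d : ℕ) (hd : d ≠ 0) (n : ℤ) : (omg d (n:ℝ)) ^ d = 1 := by
  rw [← omg_int_mul d n d]
  have h : ((n:ℝ) * (d:ℕ)) = (((n * d : ℤ)) : ℝ) := by push_cast; ring
  rw [h, omg_eq_one_iff d hd]
  exact dvd_mul_left _ _

lemma sum_omg (d : ℕ) (hd : d ≠ 0) (n : ℤ) :
    ∑ k : Fin d, omg d ((n:ℝ) * ((k:ℕ):ℝ)) = if (d:ℤ) ∣ n then (d:ℂ) else 0 := by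
  have h1 : ∀ k : Fin d, omg d ((n:ℝ) * ((k:ℕ):ℝ)) = (omg d (n:ℝ)) ^ (k:ℕ) :=
    fun k => omg_int_mul d n k
  simp_rw [h1]
  rw [Fin.sum_univ_eq_sum_range (fun k => omg d (n:ℝ) ^ k)]
  by_cases h : (d:ℤ) ∣ n
  · rw [if_pos h, (omg_eq_one_iff d hd n).2 h]
    simp
  · rw [if_neg h]
    have h2 : omg d (n:ℝ) ≠ 1 := fun hh => h ((omg_eq_one_iff d hd n).1 hh)
    rw [geom_sum_eq h2, omg_pow_d d hd]
    simp
end Aux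
section Aux2

lemma dvd_cond0 (d : ℕ) (hd : 2 ≤ d) (a b : Fin d) :
    (d:ℤ) ∣ (((a:ℕ):ℤ) - ((b:ℕ):ℤ)) ↔ a = b := by
  constructor
  · rintro ⟨q, hq⟩
    have ha := a.isLt
    have hb := b.isLt
    have hq0 : q = 0 := by
      rcases lt_trichotomy q 0 with h | h | h
      · have h1 : (d:ℤ) * q ≤ (d:ℤ) * (-1) :=
          mul_le_mul_of_nonneg_left (by omega) (by positivity)
        omega
      · exact h
      · have h1 : (d:ℤ) * 1 ≤ (d:ℤ) * q :=
          mul_le_mul_of_nonneg_left (by omega) (by positivity)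
        omega
    rw [hq0, mul_zero] at hq
    exact Fin.ext (by omega)
  · rintro rfl; simp

lemma dvd_cond1 (d : ℕ) (hd : 2 ≤ d) (a b : Fin d) :
    (d:ℤ) ∣ (((a:ℕ):ℤ) - ((b:ℕ):ℤ) + 1) ↔
      ((b:ℕ) = (a:ℕ) + 1 ∨ ((a:ℕ) = d - 1 ∧ (b:ℕ) = 0)) := by
  constructor
  · rintro ⟨q, hq⟩
    have ha := a.isLt
    have hb := b.isLt
    have hq0 : q = 0 ∨ q = 1 := by
      rcases lt_trichotomy q 0 with h | h | h
      · have h1 : (d:ℤ) * q ≤ (d:ℤ) * (-1) :=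
          mul_le_mul_of_nonneg_left (by omega) (by positivity)
        omega
      · left; exact h
      · rcases lt_or_ge q 2 with h2 | h2
        · right; omega
        · have h1 : (d:ℤ) * 2 ≤ (d:ℤ) * q :=
            mul_le_mul_of_nonneg_left h2 (by positivity)
          omega
    rcases hq0 with rfl | rfl
    · rw [mul_zero] at hq; left; omega
    · rw [mul_one] at hq; right; omega
  · rintro (h | ⟨h1, h2⟩)
    · exact ⟨0, by omega⟩
    · exact ⟨1, by omega⟩

lemma dvd_cond2 (d : ℕ) (hd : 2 ≤ d) (a : Fin d) :
    (d:ℤ) ∣ (((a:ℕ):ℤ) + 1) ↔ (a:ℕ) = d - 1 := by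
  constructor
  · rintro ⟨q, hq⟩
    have ha := a.isLt
    have hq0 : q = 1 := by
      rcases lt_trichotomy q 1 with h | h | h
      · have h1 : (d:ℤ) * q ≤ (d:ℤ) * 0 :=
          mul_le_mul_of_nonneg_left (by omega) (by positivity)
        omega
      · exact h
      · have h1 : (d:ℤ) * 2 ≤ (d:ℤ) * q :=
          mul_le_mul_of_nonneg_left (by omega) (by positivity)
        omega
    rw [hq0, mul_one] at hq
    omega
  · intro h; exact ⟨1, by omega⟩

lemma dvd_cond3 (d : ℕ) (hd : 2 ≤ d) (b : Fin d) :
    (d:ℤ) ∣ (-((b:ℕ):ℤ)) ↔ (b:ℕ) = 0 := by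
  rw [dvd_neg, Int.natCast_dvd_natCast]
  have hb := b.isLt
  constructor
  · intro h
    exact Nat.eq_zero_of_dvd_of_lt h hb
  · rintro h; rw [h]; exact dvd_zero _

end Aux2
section Aux3

lemma eps_sq (c : Prop) [Decidable c] :
    ((-1:ℂ) ^ ((if c then 1 else 0) : ℕ)) * ((-1:ℂ) ^ ((if c then 1 else 0) : ℕ)) = 1 := by
  split_ifs <;> norm_num

lemma sqrt_sq (d : ℕ) (hd : d ≠ 0) :
    ((1 / Real.sqrt d : ℝ) : ℂ) * ((1 / Real.sqrt d : ℝ) : ℂ) = 1 / (d:ℂ) := by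
  rw [← Complex.ofReal_mul]
  have h : (1 / Real.sqrt d : ℝ) * (1 / Real.sqrt d : ℝ) = 1 / (d:ℝ) := by
    rw [div_mul_div_comm, one_mul, Real.mul_self_sqrt (by positivity)]
  rw [h]
  push_cast
  ring

lemma Wodd_sum (d m : ℕ) (hd : 2 ≤ d) (a b : Fin d) (t0 : ℝ) (n : ℤ) :
    ∑ l : Fin d, Wodd d m a l * omg d (t0 + (n:ℝ) * ((l:ℕ):ℝ)) * (starRingEnd ℂ) (Wodd d m b l)
    = omg d (t0 + (((b:ℕ):ℝ) - ((a:ℕ):ℝ)) / m) *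
        (if (d:ℤ) ∣ (((a:ℕ):ℤ) - ((b:ℕ):ℤ) + n) then 1 else 0) := by
  have hd0 : d ≠ 0 := by omega
  have hdC : (d:ℂ) ≠ 0 := Nat.cast_ne_zero.mpr hd0
  have hstep : ∀ l : Fin d,
      Wodd d m a l * omg d (t0 + (n:ℝ) * ((l:ℕ):ℝ)) * (starRingEnd ℂ) (Wodd d m b l)
      = (1/(d:ℂ)) * omg d (t0 + (((b:ℕ):ℝ) - ((a:ℕ):ℝ)) / m) *
          omg d ((((((a:ℕ):ℤ) - ((b:ℕ):ℤ) + n : ℤ)):ℝ) * ((l:ℕ):ℝ)) := by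
    intro l
    simp only [Wodd, Matrix.of_apply, _root_.map_mul, map_pow, map_neg, _root_.map_one,
      Complex.conj_ofReal, omg_conj]
    have key : ∀ x y z : ℝ,
        (((1 / Real.sqrt d : ℝ) : ℂ) * ((-1:ℂ) ^ ((if (l:ℕ) = 0 then 1 else 0) : ℕ)) * omg d x)
          * omg d y
          * (((1 / Real.sqrt d : ℝ) : ℂ) * ((-1:ℂ) ^ ((if (l:ℕ) = 0 then 1 else 0) : ℕ)) * omg d z)
        = (1/(d:ℂ)) * omg d (x + y + z) := by
      intro x y z
      calc (((1 / Real.sqrt d : ℝ) : ℂ) * ((-1:ℂ) ^ ((if (l:ℕ) = 0 then 1 else 0) : ℕ)) * omg d x)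
          * omg d y
          * (((1 / Real.sqrt d : ℝ) : ℂ) * ((-1:ℂ) ^ ((if (l:ℕ) = 0 then 1 else 0) : ℕ)) * omg d z)
          = (((1 / Real.sqrt d : ℝ) : ℂ) * ((1 / Real.sqrt d : ℝ) : ℂ))
            * (((-1:ℂ) ^ ((if (l:ℕ) = 0 then 1 else 0) : ℕ)) * ((-1:ℂ) ^ ((if (l:ℕ) = 0 then 1 else 0) : ℕ)))
            * (omg d x * omg d y * omg d z) := by ring
        _ = (1/(d:ℂ)) * omg d (x + y + z) := by
            rw [sqrt_sq d hd0, eps_sq, omg_mul, omg_mul, mul_one]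
    rw [key]
    rw [mul_assoc, omg_mul]
    congr 1
    push_cast
    try ring
  rw [Finset.sum_congr rfl (fun l _ => hstep l)]
  rw [← Finset.mul_sum, sum_omg d hd0]
  split_ifs with h
  · rw [mul_one]
    field_simp
  · simp

end Aux3
section Aux4

lemma Wodd_unitary (d m : ℕ) (hd : 2 ≤ d) : Wodd d m * (Wodd d m)ᴴ = 1 := by
  ext a b
  rw [Matrix.mul_apply]
  have h0 : ∀ l : Fin d, Wodd d m a l * (Wodd d m)ᴴ l b
      = Wodd d m a l * omg d ((0:ℝ) + ((0:ℤ):ℝ) * ((l:ℕ):ℝ)) * (starRingEnd ℂ) (Wodd d m b l) := by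
    intro l
    rw [Matrix.conjTranspose_apply]
    have : ((0:ℝ) + ((0:ℤ):ℝ) * ((l:ℕ):ℝ)) = 0 := by push_cast; ring
    rw [this, omg_zero, mul_one]
    rfl
  rw [Finset.sum_congr rfl (fun l _ => h0 l), Wodd_sum d m hd a b 0 0]
  rw [Matrix.one_apply]
  have hcond : (((a:ℕ):ℤ) - ((b:ℕ):ℤ) + 0) = (((a:ℕ):ℤ) - ((b:ℕ):ℤ)) := by ring
  rw [hcond]
  simp only [dvd_cond0 d hd a b]
  split_ifs with h
  · subst h
    have : ((0:ℝ) + (((a:ℕ):ℝ) - ((a:ℕ):ℝ)) / m) = 0 := by ring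
    rw [this, omg_zero, mul_one]
  · rw [mul_zero]

lemma WDW (d m : ℕ) (hd : 2 ≤ d) (t0 : ℝ) (a b : Fin d) :
    (Wodd d m * Matrix.diagonal (fun k : Fin d => omg d (((k:ℕ):ℝ) + t0)) * (Wodd d m)ᴴ) a b
    = omg d (t0 + (((b:ℕ):ℝ) - ((a:ℕ):ℝ)) / m) *
        (if (d:ℤ) ∣ (((a:ℕ):ℤ) - ((b:ℕ):ℤ) + 1) then 1 else 0) := by
  rw [Matrix.mul_apply]
  have h0 : ∀ l : Fin d,
      (Wodd d m * Matrix.diagonal (fun k : Fin d => omg d (((k:ℕ):ℝ) + t0))) a l * (Wodd d m)ᴴ l b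
      = Wodd d m a l * omg d (t0 + ((1:ℤ):ℝ) * ((l:ℕ):ℝ)) * (starRingEnd ℂ) (Wodd d m b l) := by
    intro l
    rw [Matrix.mul_diagonal, Matrix.conjTranspose_apply]
    have : (((l:ℕ):ℝ) + t0) = (t0 + ((1:ℤ):ℝ) * ((l:ℕ):ℝ)) := by push_cast; ring
    rw [this]
    rfl
  rw [Finset.sum_congr rfl (fun l _ => h0 l), Wodd_sum d m hd a b t0 1]

lemma WZW (d m : ℕ) (hd : 2 ≤ d) (hm : 2 ≤ m) :
    Wodd d m * Zmat d * (Wodd d m)ᴴ = Oodd d m 2 := by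
  have hZ : Zmat d = Matrix.diagonal (fun k : Fin d => omg d (((k:ℕ):ℝ) + (0:ℝ))) := by
    unfold Zmat
    congr 1
    funext k
    norm_num
  ext a b
  rw [hZ, WDW d m hd 0 a b]
  simp only [dvd_cond1 d hd a b]
  rw [Oodd, Matrix.of_apply]
  have ha := a.isLt
  have hb := b.isLt
  by_cases h1 : (b:ℕ) = (a:ℕ) + 1
  · have h2 : ¬ ((a:ℕ) = d - 1 ∧ (b:ℕ) = 0) := by omega
    rw [if_pos (Or.inl h1), if_pos h1, if_neg h2, mul_one, add_zero]
    congr 1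
    have hb' : ((b:ℕ):ℝ) = ((a:ℕ):ℝ) + 1 := by exact_mod_cast h1
    rw [hb', tht]
    push_cast
    ring
  · by_cases h2 : (a:ℕ) = d - 1 ∧ (b:ℕ) = 0
    · rw [if_pos (Or.inr h2), if_pos h2, if_neg h1, mul_one, zero_add]
      congr 1
      have ha' : ((a:ℕ):ℝ) = (d:ℝ) - 1 := by
        rw [h2.1]
        push_cast [Nat.cast_sub (by omega : 1 ≤ d)]
        ring
      have hb' : ((b:ℕ):ℝ) = 0 := by exact_mod_cast h2.2
      rw [ha', hb', tht]
      push_cast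
      ring
    · rw [if_neg (by tauto), if_neg h1, if_neg h2, mul_zero, add_zero]

end Aux4
section Aux5

noncomputable def Ehat (d m : ℕ) : Matrix (Fin d) (Fin d) ℂ :=
  Matrix.of fun k l =>
    ((-1 : ℂ) ^ (((if (k : ℕ) = 0 then 1 else 0) + (if (l : ℕ) = 0 then 1 else 0)) : ℕ)) *
      omg d ((((k:ℕ):ℝ) + ((l:ℕ):ℝ)) / 2 - ((d : ℝ) - 2) / (2 * m))

lemma Tmat_decomp (d m : ℕ) :
    Tmat d m = Matrix.diagonal (fun k : Fin d => omg d (((k:ℕ):ℝ) + 1 / m))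
      - ((2 * Complex.I / d) * (Real.sin (Real.pi / m) : ℂ)) • Ehat d m := by
  ext i j
  simp only [Tmat, Ehat, Matrix.sub_apply, Matrix.smul_apply, Matrix.of_apply,
    Matrix.diagonal_apply, smul_eq_mul]
  split_ifs with h <;> ring

lemma WEW (d m : ℕ) (hd : 2 ≤ d) (a b : Fin d) :
    (Wodd d m * Ehat d m * (Wodd d m)ᴴ) a b
    = if ((a:ℕ) = d - 1 ∧ (b:ℕ) = 0) then
        (d:ℂ) * omg d (((((b:ℕ):ℝ) - ((a:ℕ):ℝ)) / m) - ((d:ℝ) - 2) / (2 * m))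
      else 0 := by
  have hd0 : d ≠ 0 := by omega
  have hdC : (d:ℂ) ≠ 0 := Nat.cast_ne_zero.mpr hd0
  set C : ℂ := (1/(d:ℂ)) * omg d (((((b:ℕ):ℝ) - ((a:ℕ):ℝ)) / m) - ((d:ℝ) - 2) / (2 * m)) with hC
  set f : Fin d → ℂ := fun k => omg d (((((a:ℕ):ℤ) + 1 : ℤ):ℝ) * ((k:ℕ):ℝ)) with hf
  set g : Fin d → ℂ := fun l => omg d (((-((b:ℕ):ℤ) : ℤ):ℝ) * ((l:ℕ):ℝ)) with hg
  have hterm : ∀ l k : Fin d,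
      Wodd d m a k * Ehat d m k l * (starRingEnd ℂ) (Wodd d m b l)
      = C * (f k * g l) := by
    intro l k
    simp only [Wodd, Ehat, Matrix.of_apply, _root_.map_mul, map_pow, map_neg, _root_.map_one,
      Complex.conj_ofReal, omg_conj, pow_add, hf, hg]
    have key : ∀ x1 x2 x3 : ℝ,
        (((1 / Real.sqrt d : ℝ) : ℂ) * ((-1:ℂ) ^ ((if (k:ℕ) = 0 then 1 else 0) : ℕ)) * omg d x1)
          * (((-1:ℂ) ^ ((if (k:ℕ) = 0 then 1 else 0) : ℕ))
              * ((-1:ℂ) ^ ((if (l:ℕ) = 0 then 1 else 0) : ℕ)) * omg d x2)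
          * (((1 / Real.sqrt d : ℝ) : ℂ) * ((-1:ℂ) ^ ((if (l:ℕ) = 0 then 1 else 0) : ℕ)) * omg d x3)
        = (1/(d:ℂ)) * omg d (x1 + x2 + x3) := by
      intro x1 x2 x3
      calc (((1 / Real.sqrt d : ℝ) : ℂ) * ((-1:ℂ) ^ ((if (k:ℕ) = 0 then 1 else 0) : ℕ)) * omg d x1)
          * (((-1:ℂ) ^ ((if (k:ℕ) = 0 then 1 else 0) : ℕ))
              * ((-1:ℂ) ^ ((if (l:ℕ) = 0 then 1 else 0) : ℕ)) * omg d x2)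
          * (((1 / Real.sqrt d : ℝ) : ℂ) * ((-1:ℂ) ^ ((if (l:ℕ) = 0 then 1 else 0) : ℕ)) * omg d x3)
          = (((1 / Real.sqrt d : ℝ) : ℂ) * ((1 / Real.sqrt d : ℝ) : ℂ))
            * (((-1:ℂ) ^ ((if (k:ℕ) = 0 then 1 else 0) : ℕ)) * ((-1:ℂ) ^ ((if (k:ℕ) = 0 then 1 else 0) : ℕ)))
            * (((-1:ℂ) ^ ((if (l:ℕ) = 0 then 1 else 0) : ℕ)) * ((-1:ℂ) ^ ((if (l:ℕ) = 0 then 1 else 0) : ℕ)))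
            * (omg d x1 * omg d x2 * omg d x3) := by ring
        _ = (1/(d:ℂ)) * omg d (x1 + x2 + x3) := by
            rw [sqrt_sq d hd0, eps_sq, eps_sq, omg_mul, omg_mul]
            ring
    rw [key, hC, omg_mul, mul_assoc, omg_mul]
    congr 1
    push_cast
    ring
  rw [Matrix.mul_apply]
  have h1 : ∀ l : Fin d,
      (Wodd d m * Ehat d m) a l * (Wodd d m)ᴴ l b = ∑ k : Fin d, C * (f k * g l) := by
    intro l
    rw [Matrix.mul_apply, Matrix.conjTranspose_apply, Finset.sum_mul]
    exact Finset.sum_congr rfl fun k _ => hterm l k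
  rw [Finset.sum_congr rfl (fun l _ => h1 l)]
  have h2 : ∑ l : Fin d, ∑ k : Fin d, C * (f k * g l)
      = C * ((∑ k : Fin d, f k) * (∑ l : Fin d, g l)) := by
    rw [Finset.sum_mul_sum, Finset.mul_sum]
    simp_rw [Finset.mul_sum]
    exact Finset.sum_comm
  rw [h2, hf, hg]
  rw [sum_omg d hd0, sum_omg d hd0]
  simp only [dvd_cond2 d hd a, dvd_cond3 d hd b]
  by_cases ha : (a:ℕ) = d - 1
  · by_cases hb : (b:ℕ) = 0
    · rw [if_pos ha, if_pos hb, if_pos ⟨ha, hb⟩, hC]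
      field_simp
    · have hcon : ¬((a:ℕ) = d - 1 ∧ (b:ℕ) = 0) := fun h => hb h.2
      rw [if_pos ha, if_neg hb, if_neg hcon, mul_zero, mul_zero]
  · have hcon : ¬((a:ℕ) = d - 1 ∧ (b:ℕ) = 0) := fun h => ha h.1
    rw [if_neg ha, if_neg hcon, zero_mul, mul_zero]

end Aux5
section Aux6

lemma two_I_sin (d m : ℕ) (hd : 2 ≤ d) (hm : 2 ≤ m) :
    2 * Complex.I * (Real.sin (Real.pi / m) : ℂ)
      = omg d ((d:ℝ) / (2 * m)) - omg d (-((d:ℝ) / (2 * m))) := by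
  have hd' : (d:ℝ) ≠ 0 := by positivity
  have hm' : (m:ℝ) ≠ 0 := by positivity
  have h1 : omg d ((d:ℝ) / (2 * m)) = Complex.exp ((Real.pi / m : ℝ) * Complex.I) := by
    rw [omg]
    have h : (2 * Real.pi * ((d:ℝ) / (2 * m)) / d : ℝ) = Real.pi / m := by
      field_simp
    rw [h]
  have h2 : omg d (-((d:ℝ) / (2 * m))) = Complex.exp ((-(Real.pi / m) : ℝ) * Complex.I) := by
    rw [omg]
    have h : (2 * Real.pi * (-((d:ℝ) / (2 * m))) / d : ℝ) = -(Real.pi / m) := by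
      field_simp
    rw [h]
  rw [h1, h2, Complex.exp_mul_I, Complex.exp_mul_I]
  push_cast
  rw [Complex.cos_neg, Complex.sin_neg]
  ring

lemma WTW (d m : ℕ) (hd : 2 ≤ d) (hm : 2 ≤ m) :
    Wodd d m * Tmat d m * (Wodd d m)ᴴ = Oodd d m 3 := by
  have hd0 : d ≠ 0 := by omega
  have hdC : (d:ℂ) ≠ 0 := Nat.cast_ne_zero.mpr hd0
  ext a b
  rw [Tmat_decomp d m, Matrix.mul_sub, Matrix.mul_smul, Matrix.sub_mul, Matrix.smul_mul,
    Matrix.sub_apply, Matrix.smul_apply, WDW d m hd (1/m) a b, WEW d m hd a b, smul_eq_mul]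
  simp only [dvd_cond1 d hd a b]
  rw [Oodd, Matrix.of_apply]
  have ha := a.isLt
  have hb := b.isLt
  by_cases h1 : (b:ℕ) = (a:ℕ) + 1
  · have h2 : ¬ ((a:ℕ) = d - 1 ∧ (b:ℕ) = 0) := by omega
    rw [if_pos (Or.inl h1), if_pos h1, if_neg h2, if_neg h2, mul_one, mul_zero, sub_zero, add_zero]
    have hb' : ((b:ℕ):ℝ) = ((a:ℕ):ℝ) + 1 := by exact_mod_cast h1
    rw [hb', tht]
    congr 1
    push_cast
    ring
  · by_cases h2 : (a:ℕ) = d - 1 ∧ (b:ℕ) = 0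
    · rw [if_pos (Or.inr h2), if_pos h2, if_neg h1, mul_one, zero_add]
      have ha' : ((a:ℕ):ℝ) = (d:ℝ) - 1 := by
        rw [h2.1]
        push_cast [Nat.cast_sub (by omega : 1 ≤ d)]
        ring
      have hb' : ((b:ℕ):ℝ) = 0 := by exact_mod_cast h2.2
      rw [ha', hb']
      have hmul : 2 * Complex.I / (d:ℂ) * (Real.sin (Real.pi / m) : ℂ)
            * ((d:ℂ) * omg d ((0 - ((d:ℝ) - 1)) / m - ((d:ℝ) - 2) / (2 * m)))
          = (2 * Complex.I * (Real.sin (Real.pi / m) : ℂ))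
            * omg d ((0 - ((d:ℝ) - 1)) / m - ((d:ℝ) - 2) / (2 * m)) := by
        field_simp
      rw [hmul, two_I_sin d m hd hm, sub_mul, omg_mul, omg_mul]
      have e1 : ((d:ℝ) / (2 * m) + ((0 - ((d:ℝ) - 1)) / m - ((d:ℝ) - 2) / (2 * m)))
          = (1 / (m:ℝ) + (0 - ((d:ℝ) - 1)) / m) := by
        have hm' : (m:ℝ) ≠ 0 := by positivity
        field_simp
        ring
      have e2 : (-((d:ℝ) / (2 * m)) + ((0 - ((d:ℝ) - 1)) / m - ((d:ℝ) - 2) / (2 * m)))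
          = ((1 - (d:ℝ)) * tht m 3) := by
        have hm' : (m:ℝ) ≠ 0 := by positivity
        rw [tht]
        push_cast
        field_simp
        ring
      rw [e1, e2, if_pos h2]
      ring
    · rw [if_neg (by tauto), if_neg h1, if_neg h2, if_neg h2, mul_zero, mul_zero, sub_zero,
        add_zero]

end Aux6
section Aux7

lemma Wev_eq (d m : ℕ) : Wev d m = (Wodd d m).submatrix Fin.rev id := by
  ext r j
  simp only [Wev, Wodd, Matrix.submatrix_apply, Matrix.of_apply, id_eq, Fin.val_rev]
  have h : d - 1 - (r:ℕ) = d - ((r:ℕ) + 1) := by omega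
  rw [h]

lemma flip_conj (d m : ℕ) (A : Matrix (Fin d) (Fin d) ℂ) (r s : Fin d) :
    (Wev d m * A * (Wev d m)ᴴ) r s = (Wodd d m * A * (Wodd d m)ᴴ) r.rev s.rev := by
  rw [Wev_eq]
  simp only [Matrix.mul_apply, Matrix.conjTranspose_apply, Matrix.submatrix_apply, id_eq]

lemma Wev_unitary (d m : ℕ) (hd : 2 ≤ d) : Wev d m * (Wev d m)ᴴ = 1 := by
  ext r s
  have h : Wev d m * (Wev d m)ᴴ = Wev d m * 1 * (Wev d m)ᴴ := by rw [mul_one]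
  rw [h, flip_conj, mul_one, Wodd_unitary d m hd]
  rw [Matrix.one_apply, Matrix.one_apply]
  simp [Fin.rev_inj]

lemma Oodd_rev (d m x : ℕ) (hd : 2 ≤ d) (r s : Fin d) :
    Oodd d m x r.rev s.rev = Oev d m x r s := by
  simp only [Oodd, Oev, Matrix.of_apply, Fin.val_rev]
  have hr := r.isLt
  have hs := s.isLt
  have h1 : (d - ((s:ℕ) + 1) = d - ((r:ℕ) + 1) + 1) ↔ ((r:ℕ) = (s:ℕ) + 1) := by omega
  have h2 : (d - ((r:ℕ) + 1) = d - 1 ∧ d - ((s:ℕ) + 1) = 0) ↔ ((r:ℕ) = 0 ∧ (s:ℕ) = d - 1) := by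
    omega
  rw [if_congr h1 rfl rfl, if_congr h2 rfl rfl]

theorem stmt17' (d m : ℕ) (hd : 2 ≤ d) (hm : 2 ≤ m) :
    Wodd d m ∈ Matrix.unitaryGroup (Fin d) ℂ ∧
    Wev d m ∈ Matrix.unitaryGroup (Fin d) ℂ ∧
    Wodd d m * Zmat d * (Wodd d m)ᴴ = Oodd d m 2 ∧
    Wodd d m * Tmat d m * (Wodd d m)ᴴ = Oodd d m 3 ∧
    Wev d m * Zmat d * (Wev d m)ᴴ = Oev d m 2 ∧
    Wev d m * Tmat d m * (Wev d m)ᴴ = Oev d m 3 := by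
  refine ⟨?_, ?_, WZW d m hd hm, WTW d m hd hm, ?_, ?_⟩
  · rw [Matrix.mem_unitaryGroup_iff, Matrix.star_eq_conjTranspose]
    exact Wodd_unitary d m hd
  · rw [Matrix.mem_unitaryGroup_iff, Matrix.star_eq_conjTranspose]
    exact Wev_unitary d m hd
  · ext r s
    rw [flip_conj, WZW d m hd hm, Oodd_rev d m 2 hd r s]
  · ext r s
    rw [flip_conj, WTW d m hd hm, Oodd_rev d m 3 hd r s]

end Aux7

/-- W_odd and W_ev are unitary with
W_odd Z_d W_odd† = O_{odd,2}, W_odd T_{d,m} W_odd† = O_{odd,3},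
W_ev Z_d W_ev† = O_{ev,2}, and W_ev T_{d,m} W_ev† = O_{ev,3}. -/
theorem stmt17 (d m : ℕ) (hd : 2 ≤ d) (hm : 2 ≤ m) :
    Wodd d m ∈ Matrix.unitaryGroup (Fin d) ℂ ∧
    Wev d m ∈ Matrix.unitaryGroup (Fin d) ℂ ∧
    Wodd d m * Zmat d * (Wodd d m)ᴴ = Oodd d m 2 ∧
    Wodd d m * Tmat d m * (Wodd d m)ᴴ = Oodd d m 3 ∧
    Wev d m * Zmat d * (Wev d m)ᴴ = Oev d m 2 ∧
    Wev d m * Tmat d m * (Wev d m)ᴴ = Oev d m 3 := by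
  exact stmt17' d m hd hm
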